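/- Let h > 0, x₁ < x₂ be real numbers, V₁, V₂ continuous real-valued functions and r₀ a continuous real-valued function and r₁ a continuously differentiable real-valued function on [x₁,x₂], and z ∈ ℂ. Suppose v₁, v₂ are twice continuously differentiable complex-valued functions on [x₁,x₂] satisfying the system −h²v₁'' + V₁ v₁ + h r₀ v₂ + h² r₁ v₂' = z v₁ and −h²v₂'' + V₂ v₂ + h r₀ v₁ − h² (r₁ v₁)' = z v₂. Then (Im z) · ∫_{x₁}^{x₂} (|v₁(x)|² + |v₂(x)|²) dx = h² · Im[ −v₁'(x) \overline{v₁(x)} − v₂'(x) \overline{v₂(x)} + r₁(x) v₂(x) \overline{v₁(x)} ]_{x=x₁}^{x=x₂}, where [g]_{x₁}^{x₂} := g(x₂) − g(x₁). -/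

import Mathlib

open MeasureTheory Set

lemma stmt_10_alg (H b V₁ V₂ ρ ρ' : ℝ) (z w₁ w₂ d₁ d₂ D₁ D₂ : ℂ)
    (e1 : -(H:ℂ)*D₁ + V₁*w₁ + b*w₂ + H*ρ*d₂ = z*w₁)
    (e2 : -(H:ℂ)*D₂ + V₂*w₂ + b*w₁ - H*(ρ'*w₁ + ρ*d₁) = z*w₂) :
    H * (-(D₁*(starRingEnd ℂ) w₁ + d₁*(starRingEnd ℂ) d₁)
      - (D₂*(starRingEnd ℂ) w₂ + d₂*(starRingEnd ℂ) d₂)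
      + (((ρ':ℂ)*w₂ + ρ*d₂)*(starRingEnd ℂ) w₁ + ρ*w₂*(starRingEnd ℂ) d₁)).im
    = z.im * (‖w₁‖^2 + ‖w₂‖^2) := by
  have key : (H:ℂ) * (-(D₁*(starRingEnd ℂ) w₁ + d₁*(starRingEnd ℂ) d₁)
      - (D₂*(starRingEnd ℂ) w₂ + d₂*(starRingEnd ℂ) d₂)
      + (((ρ':ℂ)*w₂ + ρ*d₂)*(starRingEnd ℂ) w₁ + ρ*w₂*(starRingEnd ℂ) d₁))
    = z*(w₁*(starRingEnd ℂ) w₁) + z*(w₂*(starRingEnd ℂ) w₂)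
      - V₁*(w₁*(starRingEnd ℂ) w₁) - V₂*(w₂*(starRingEnd ℂ) w₂)
      - b*(w₂*(starRingEnd ℂ) w₁ + w₁*(starRingEnd ℂ) w₂)
      + H*ρ'*(w₁*(starRingEnd ℂ) w₂ + w₂*(starRingEnd ℂ) w₁)
      + H*ρ*(d₁*(starRingEnd ℂ) w₂ + w₂*(starRingEnd ℂ) d₁)
      - H*(d₁*(starRingEnd ℂ) d₁) - H*(d₂*(starRingEnd ℂ) d₂) := by
    linear_combination ((starRingEnd ℂ) w₁) * e1 + ((starRingEnd ℂ) w₂) * e2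
  rw [show ∀ (X:ℂ), H * X.im = ((H:ℂ)*X).im from fun X => by simp, key]
  simp [Complex.mul_conj, Complex.sq_norm, Complex.add_im, Complex.sub_im, Complex.mul_im,
    Complex.normSq_apply, Complex.conj_re, Complex.conj_im, Complex.mul_re]
  ring

/-- The Green-type identity (4.8) of the paper: if `(v₁, v₂)` solves the coupled system
`−h²v₁'' + V₁v₁ + h r₀ v₂ + h² r₁ v₂' = z v₁`,
`−h²v₂'' + V₂v₂ + h r₀ v₁ − h² (r₁v₁)' = z v₂` on `[x₁,x₂]`, then
`Im z · ∫ (|v₁|² + |v₂|²) = h² Im [ −v₁'v̄₁ − v₂'v̄₂ + r₁ v₂ v̄₁ ]_{x₁}^{x₂}`. -/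
theorem stmt_10 (h : ℝ) (hh : 0 < h) (x₁ x₂ : ℝ) (hx : x₁ < x₂) (z : ℂ)
    (U : Set ℝ) (hUo : IsOpen U) (hIU : Icc x₁ x₂ ⊆ U)
    (V₁ V₂ r₀ : ℝ → ℝ)
    (hV₁ : ContinuousOn V₁ U) (hV₂ : ContinuousOn V₂ U) (hr₀ : ContinuousOn r₀ U)
    (r₁ : ℝ → ℝ) (hr₁ : ContDiffOn ℝ 1 r₁ U)
    (v₁ v₂ : ℝ → ℂ) (hv₁ : ContDiffOn ℝ 2 v₁ U) (hv₂ : ContDiffOn ℝ 2 v₂ U)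
    (heq₁ : ∀ x ∈ Icc x₁ x₂,
      -(h:ℂ)^2 * deriv (deriv v₁) x + (V₁ x) * v₁ x + (h:ℂ) * (r₀ x) * v₂ x
        + (h:ℂ)^2 * (r₁ x) * deriv v₂ x = z * v₁ x)
    (heq₂ : ∀ x ∈ Icc x₁ x₂,
      -(h:ℂ)^2 * deriv (deriv v₂) x + (V₂ x) * v₂ x + (h:ℂ) * (r₀ x) * v₁ x
        - (h:ℂ)^2 * deriv (fun y => (r₁ y : ℂ) * v₁ y) x = z * v₂ x) :
    z.im * (∫ x in x₁..x₂, (‖v₁ x‖ ^ 2 + ‖v₂ x‖ ^ 2)) =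
      h ^ 2 *
        (((-deriv v₁ x₂ * (starRingEnd ℂ) (v₁ x₂) - deriv v₂ x₂ * (starRingEnd ℂ) (v₂ x₂)
            + (r₁ x₂ : ℂ) * v₂ x₂ * (starRingEnd ℂ) (v₁ x₂)) -
          (-deriv v₁ x₁ * (starRingEnd ℂ) (v₁ x₁) - deriv v₂ x₁ * (starRingEnd ℂ) (v₂ x₁)
            + (r₁ x₁ : ℂ) * v₂ x₁ * (starRingEnd ℂ) (v₁ x₁))).im) := by
  set G : ℝ → ℂ := fun x => -deriv v₁ x * (starRingEnd ℂ) (v₁ x)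
      - deriv v₂ x * (starRingEnd ℂ) (v₂ x) + (r₁ x : ℂ) * v₂ x * (starRingEnd ℂ) (v₁ x)
    with hG
  -- differentiability facts on the open set U
  have hd1 : ∀ x ∈ U, HasDerivAt v₁ (deriv v₁ x) x := fun x hxU =>
    ((hv₁.differentiableOn (by norm_num)).differentiableAt (hUo.mem_nhds hxU)).hasDerivAt
  have hd2 : ∀ x ∈ U, HasDerivAt v₂ (deriv v₂ x) x := fun x hxU =>
    ((hv₂.differentiableOn (by norm_num)).differentiableAt (hUo.mem_nhds hxU)).hasDerivAt
  have hdv₁ : ContDiffOn ℝ 1 (deriv v₁) U := hv₁.deriv_of_isOpen hUo (by norm_num)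
  have hdv₂ : ContDiffOn ℝ 1 (deriv v₂) U := hv₂.deriv_of_isOpen hUo (by norm_num)
  have hD1 : ∀ x ∈ U, HasDerivAt (deriv v₁) (deriv (deriv v₁) x) x := fun x hxU =>
    ((hdv₁.differentiableOn (by norm_num)).differentiableAt (hUo.mem_nhds hxU)).hasDerivAt
  have hD2 : ∀ x ∈ U, HasDerivAt (deriv v₂) (deriv (deriv v₂) x) x := fun x hxU =>
    ((hdv₂.differentiableOn (by norm_num)).differentiableAt (hUo.mem_nhds hxU)).hasDerivAt
  have hrd : ∀ x ∈ U, HasDerivAt (fun y => (r₁ y : ℂ)) (Complex.ofReal (deriv r₁ x)) x := fun x hxU =>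
    (((hr₁.differentiableOn (by norm_num)).differentiableAt
      (hUo.mem_nhds hxU)).hasDerivAt).ofReal_comp
  -- the derivative of G
  have hGd : ∀ x ∈ U, HasDerivAt G
      (-(deriv (deriv v₁) x * (starRingEnd ℂ) (v₁ x) + deriv v₁ x * (starRingEnd ℂ) (deriv v₁ x))
        - (deriv (deriv v₂) x * (starRingEnd ℂ) (v₂ x) + deriv v₂ x * (starRingEnd ℂ) (deriv v₂ x))
        + (((Complex.ofReal (deriv r₁ x)) * v₂ x + (r₁ x : ℂ) * deriv v₂ x) * (starRingEnd ℂ) (v₁ x)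
          + (r₁ x : ℂ) * v₂ x * (starRingEnd ℂ) (deriv v₁ x))) x := by
    intro x hxU
    have h1 := ((hD1 x hxU).mul ((hd1 x hxU).star)).neg
    have h2 := (hD2 x hxU).mul ((hd2 x hxU).star)
    have h3 := (((hrd x hxU).mul (hd2 x hxU)).mul ((hd1 x hxU).star))
    have := (h1.sub h2).add h3
    convert this using 1
    rfl
    funext y
    simp only [hG, starRingEnd_apply, Pi.mul_apply, Pi.add_apply, Pi.sub_apply, Pi.neg_apply]
    ring
    rfl
  -- the derivative of the (real) boundary function
  have hFd : ∀ x ∈ Set.uIcc x₁ x₂, HasDerivAt (fun x => h ^ 2 * (G x).im)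
      (z.im * (‖v₁ x‖ ^ 2 + ‖v₂ x‖ ^ 2)) x := by
    intro x hxI
    rw [Set.uIcc_of_le hx.le] at hxI
    have hxU := hIU hxI
    have hIm := (Complex.imCLM.hasFDerivAt.comp_hasDerivAt x (hGd x hxU)).const_mul ((h:ℝ) ^ 2)
    convert hIm using 1
    rfl
    rfl
    rfl
    -- compute the value of the derivative using the equations
    have e1 := heq₁ x hxI
    have e2 := heq₂ x hxI
    have hder : deriv (fun y => (r₁ y : ℂ) * v₁ y) x
        = (Complex.ofReal (deriv r₁ x)) * v₁ x + (r₁ x : ℂ) * deriv v₁ x :=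
      ((hrd x hxU).mul (hd1 x hxU)).deriv
    rw [hder] at e2
    have := stmt_10_alg (h^2) (h * r₀ x) (V₁ x) (V₂ x) (r₁ x) (deriv r₁ x) z
      (v₁ x) (v₂ x) (deriv v₁ x) (deriv v₂ x) (deriv (deriv v₁) x) (deriv (deriv v₂) x)
      (by push_cast; linear_combination e1) (by push_cast; linear_combination e2)
    rw [← this]
    simp only [Complex.imCLM_apply]
  -- integrability of the integrand
  have hcont : ContinuousOn (fun x => z.im * (‖v₁ x‖ ^ 2 + ‖v₂ x‖ ^ 2))
      (Set.uIcc x₁ x₂) := by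
    rw [Set.uIcc_of_le hx.le]
    have c1 : ContinuousOn v₁ (Icc x₁ x₂) := (hv₁.continuousOn).mono hIU
    have c2 : ContinuousOn v₂ (Icc x₁ x₂) := (hv₂.continuousOn).mono hIU
    exact continuousOn_const.mul
      (((continuous_norm.comp_continuousOn c1).pow 2).add
        ((continuous_norm.comp_continuousOn c2).pow 2))
  have hint : IntervalIntegrable
      (fun x => z.im * (‖v₁ x‖ ^ 2 + ‖v₂ x‖ ^ 2)) volume x₁ x₂ :=
    hcont.intervalIntegrable
  have hFTC := intervalIntegral.integral_eq_sub_of_hasDerivAt hFd hint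
  rw [intervalIntegral.integral_const_mul] at hFTC
  rw [hFTC, hG]
  simp [Complex.sub_im]
  ring
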